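/- arXiv:1808.06306 — 10 statements merged into one kernel-verified Lean document; each statement's English description precedes it below -/
import Mathlib

section
/- Let n, k be positive integers and let S = {S_1, ..., S_k} be a set system with S_i ⊆ [n] for all i ∈ [k]. Suppose S satisfies the MDS condition and, for all i ∈ [k], |S_1 ∩ S_2 ∩ ... ∩ S_i| = k - i. Then for any prime power q with q ≥ n, there exists a k×n MDS matrix A over the finite field F_q such that A_{i,j} = 0 if and only if j ∈ S_i. -/
/-!
Fix distinct points `α_j ∈ F` and let row `i` of `A` list the values at these points of
`p_i = ∏_{t ∈ S_i} (X - α_t)`, so that `A i j = 0` exactly when `j ∈ S_i`. The MDS condition for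
singletons gives `deg p_i < k`; a vanishing `k × k` minor would then give a nonzero combination
of the `p_i` of degree `< k` with `k` roots. This is impossible because the `p_i` are linearly
independent: by the chain condition, for each `m > 0` some `t` lies in `S_0, …, S_{m-1}` but not
in `S_m`, so evaluation at `α_t` kills `p_0, …, p_{m-1}` but not `p_m`.
-/

open Polynomial Finset Lagrange

theorem LinearIndependent.of_triangular_dual {R M ι : Type*} [Ring R] [NoZeroDivisors R]
    [AddCommGroup M] [Module R M] [Fintype ι] [LinearOrder ι] {p : ι → M}
    (h : ∀ m, ∃ φ : M →ₗ[R] R, (∀ i < m, φ (p i) = 0) ∧ φ (p m) ≠ 0) :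
    LinearIndependent R p := by
  refine Fintype.linearIndependent_iff.2 fun g hg m => ?_
  induction m using WellFoundedGT.induction with
  | ind m ih =>
    obtain ⟨φ, hφ, hφm⟩ := h m
    have hsum : ∑ i, g i * φ (p i) = g m * φ (p m) :=
      Finset.sum_eq_single m (fun i _ hi => by
        rcases hi.lt_or_gt with hlt | hgt
        · rw [hφ i hlt, mul_zero]
        · rw [ih i hgt, zero_mul]) (by simp)
    have : g m * φ (p m) = 0 := by
      simpa [hsum] using congrArg φ hg
    exact (mul_eq_zero.1 this).resolve_right hφm

theorem det_eval_ne_zero_of_linearIndependent {K ι : Type*} [Field K] [Fintype ι]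
    [DecidableEq ι] {p : ι → K[X]} (hp : LinearIndependent K p)
    (hdeg : ∀ i, (p i).degree < Fintype.card ι) {x : ι → K} (hx : Function.Injective x) :
    (Matrix.of fun i j => (p i).eval (x j)).det ≠ 0 := by
  intro hdet
  obtain ⟨v, hv0, hv⟩ := Matrix.exists_vecMul_eq_zero_iff.2 hdet
  have hdegP : (∑ i, v i • p i).degree < Fintype.card ι := by
    rw [← mem_degreeLT]
    exact Submodule.sum_mem _ fun i _ => Submodule.smul_mem _ _ (mem_degreeLT.2 (hdeg i))
  have hP : ∑ i, v i • p i = 0 :=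
    eq_zero_of_degree_lt_of_eval_index_eq_zero univ hx.injOn hdegP fun j _ => by
      simpa [eval_finsetSum, Matrix.vecMul, dotProduct] using congrFun hv j
  exact hv0 (funext (Fintype.linearIndependent_iff.1 hp v hP))

theorem eval_nodal_eq_zero_iff {R ι : Type*} [CommRing R] [IsDomain R] {s : Finset ι}
    {v : ι → R} (hv : Function.Injective v) {j : ι} : (nodal s v).eval (v j) = 0 ↔ j ∈ s := by
  refine ⟨fun h => ?_, eval_nodal_at_node⟩
  by_contra hj
  exact eval_nodal_not_at_node (fun i hi hji => hj ((hv hji : j = i) ▸ hi)) h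

theorem linearIndependent_nodal {R ι κ : Type*} [CommRing R] [IsDomain R] [Fintype κ]
    [LinearOrder κ] {S : κ → Finset ι} {v : ι → R} (hv : Function.Injective v)
    (hS : ∀ m, ¬IsMin m → ∃ t ∉ S m, ∀ i < m, t ∈ S i) :
    LinearIndependent R fun i => nodal (S i) v := by
  refine LinearIndependent.of_triangular_dual fun m => ?_
  by_cases hm : IsMin m
  -- `S m` may exhaust all nodes, so the first polynomial is detected by its leading coefficient
  · exact ⟨lcoeff R (nodal (S m) v).natDegree, fun i hi => (hm.not_lt hi).elim,
      leadingCoeff_ne_zero.2 nodal_ne_zero⟩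
  · obtain ⟨t, htm, ht⟩ := hS m hm
    exact ⟨leval (v t), fun i hi => eval_nodal_at_node (ht i hi),
      mt (eval_nodal_eq_zero_iff hv).1 htm⟩

theorem exists_notMem_forall_lt_mem_of_card_inf_Iic {k : ℕ} {ι : Type*} [DecidableEq ι]
    [Fintype ι] {S : Fin k → Finset ι}
    (hchain : ∀ i : Fin k, ((Iic i).inf S).card = k - (i.val + 1))
    (m : Fin k) (hm : ¬IsMin m) : ∃ t ∉ S m, ∀ i < m, t ∈ S i := by
  obtain ⟨b, hb⟩ := not_isMin_iff.1 hm
  let m' : Fin k := ⟨m - 1, by omega⟩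
  have hIic : ∀ i, i < m ↔ i ≤ m' := fun i => by
    simp only [Fin.lt_def, Fin.le_def, m']
    omega
  suffices ∃ t ∈ (Iic m').inf S, t ∉ S m from
    let ⟨t, ht, htm⟩ := this
    ⟨t, htm, fun i hi => mem_of_subset (inf_le (mem_Iic.2 ((hIic i).1 hi))) ht⟩
  by_contra! hsub
  have hle : (Iic m').inf S ⊆ (Iic m).inf S := Finset.le_inf fun i hi => by
    rcases (mem_Iic.1 hi).lt_or_eq with hlt | rfl
    · exact inf_le (mem_Iic.2 ((hIic i).1 hlt))
    · exact hsub
  have := card_le_card hle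
  rw [hchain, hchain] at this
  simp only [m'] at this
  omega

theorem stmt_0_general (n k : ℕ)
    (S : Fin k → Finset (Fin n))
    (hMDS : ∀ I : Finset (Fin k), I.Nonempty → I.card + (I.inf S).card ≤ k)
    (hchain : ∀ i : Fin k, ((Finset.Iic i).inf S).card = k - (i.val + 1))
    (F : Type) [Field F] [Fintype F] (hcard : n ≤ Fintype.card F) :
    ∃ A : Matrix (Fin k) (Fin n) F,
      (∀ g : Fin k → Fin n, Function.Injective g → (A.submatrix id g).det ≠ 0) ∧
      (∀ (i : Fin k) (j : Fin n), A i j = 0 ↔ j ∈ S i) := by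
  classical
  obtain ⟨α⟩ : Nonempty (Fin n ↪ F) :=
    Function.Embedding.nonempty_of_card_le (by simpa using hcard)
  have hindep : LinearIndependent F fun i => nodal (S i) α :=
    linearIndependent_nodal α.injective (exists_notMem_forall_lt_mem_of_card_inf_Iic hchain)
  have hdeg : ∀ i, (nodal (S i) α).degree < Fintype.card (Fin k) := fun i => by
    have := hMDS {i} (singleton_nonempty i)
    rw [card_singleton, inf_singleton] at this
    rw [degree_nodal, Fintype.card_fin]
    exact_mod_cast (by omega : (S i).card < k)
  refine ⟨Matrix.of fun i j => (nodal (S i) α).eval (α j), fun g hg => ?_, fun i j => ?_⟩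
  · exact det_eval_ne_zero_of_linearIndependent hindep hdeg (α.injective.comp hg)
  · exact eval_nodal_eq_zero_iff α.injective

/-- Let `n, k` be positive integers and `S = {S_1, ..., S_k}` a set system with
`S_i ⊆ [n]`. Suppose `S` satisfies the MDS condition (for every nonempty `I ⊆ [k]`,
`|I| + |∩_{i∈I} S_i| ≤ k`) and, for all `i ∈ [k]`, `|S_1 ∩ ... ∩ S_i| = k - i`.
Then over any finite field of size at least `n` there exists a `k × n` MDS matrix `A`
(every `k × k` submatrix is invertible) with `A i j = 0` iff `j ∈ S_i`. -/
theorem stmt_0 (n k : ℕ) (hn : 0 < n) (hk : 0 < k)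
    (S : Fin k → Finset (Fin n))
    (hMDS : ∀ I : Finset (Fin k), I.Nonempty → I.card + (I.inf S).card ≤ k)
    (hchain : ∀ i : Fin k, ((Finset.Iic i).inf S).card = k - (i.val + 1))
    (F : Type) [Field F] [Fintype F] (hcard : n ≤ Fintype.card F) :
    ∃ A : Matrix (Fin k) (Fin n) F,
      (∀ g : Fin k → Fin n, Function.Injective g → (A.submatrix id g).det ≠ 0) ∧
      (∀ (i : Fin k) (j : Fin n), A i j = 0 ↔ j ∈ S i) :=
  stmt_0_general n k S hMDS hchain F hcard
end

section
/- Let n, k be positive integers and let S = {S_1, ..., S_k} be a set system with S_i ⊆ [n] for all i ∈ [k]. Suppose that for all i ∈ [k] we have |S_i| ≤ i - 1. Then for any prime power q with q ≥ n + 1, there exists a k×n MDS matrix A over the finite field F_q such that A_{i,j} = 0 if and only if j ∈ S_i. -/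
/-!
Choose distinct points `x 1, …, x n` and one more point `y` of `F` (possible since
`|F| ≥ n + 1`) and let row `i` of `A` be the values at the `x j` of the monic polynomial
`P_i = (X - y)^(i - 1 - |S_i|) ∏_{s ∈ S_i} (X - x s)` of degree `i - 1`. Its zeros among the
`x j` are exactly the `x s` with `s ∈ S_i`. Since `P_1, …, P_k` are monic of degrees `0, …, k - 1`,
row reduction turns any `k × k` submatrix of `A` into a Vandermonde matrix on distinct points.
-/

open Polynomial

section PaddedVanishingPoly

variable {R ι : Type*} [CommRing R]

noncomputable def paddedVanishingPoly (x : ι → R) (y : R) (s : Finset ι) (d : ℕ) : R[X] :=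
  (X - C y) ^ (d - s.card) * ∏ j ∈ s, (X - C (x j))

theorem monic_paddedVanishingPoly (x : ι → R) (y : R) (s : Finset ι) (d : ℕ) :
    (paddedVanishingPoly x y s d).Monic :=
  ((monic_X_sub_C y).pow _).mul (monic_prod_of_monic _ _ fun j _ => monic_X_sub_C (x j))

theorem natDegree_paddedVanishingPoly [Nontrivial R] (x : ι → R) (y : R) {s : Finset ι}
    {d : ℕ} (hs : s.card ≤ d) : (paddedVanishingPoly x y s d).natDegree = d := by
  rw [paddedVanishingPoly, ((monic_X_sub_C y).pow _).natDegree_mul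
      (monic_prod_of_monic _ _ fun j _ => monic_X_sub_C (x j)),
    (monic_X_sub_C y).natDegree_pow, natDegree_X_sub_C, mul_one,
    natDegree_finsetProd_X_sub_C_eq_card, Nat.sub_add_cancel hs]

theorem eval_paddedVanishingPoly_eq_zero_iff [IsDomain R] {x : ι → R} {y : R}
    (hx : Function.Injective x) (hy : ∀ j, x j ≠ y) (s : Finset ι) (d : ℕ) (j : ι) :
    (paddedVanishingPoly x y s d).eval (x j) = 0 ↔ j ∈ s := by
  simp only [paddedVanishingPoly, eval_mul, eval_pow, eval_sub, eval_X, eval_C, eval_prod,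
    mul_eq_zero, pow_eq_zero_iff', Finset.prod_eq_zero_iff, sub_eq_zero, hx.eq_iff]
  constructor
  · rintro (⟨hxy, -⟩ | ⟨i, hi, rfl⟩)
    · exact absurd hxy (hy j)
    · exact hi
  · exact fun hj => Or.inr ⟨j, hj, rfl⟩

end PaddedVanishingPoly

theorem det_eval_monic_ne_zero {R : Type*} [CommRing R] [IsDomain R] {k : ℕ}
    {P : Fin k → R[X]} (hdeg : ∀ i, (P i).natDegree = i) (hmonic : ∀ i, (P i).Monic)
    {v : Fin k → R} (hv : Function.Injective v) :
    (Matrix.of fun i j => (P i).eval (v j)).det ≠ 0 := by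
  have hvand := Matrix.det_vandermonde_ne_zero_iff.mpr hv
  rwa [Matrix.det_eval_matrixOfPolynomials_eq_det_vandermonde v P hdeg hmonic,
    ← Matrix.det_transpose] at hvand

theorem exists_embedding_and_forall_ne {ι F : Type*} [Fintype ι] [Fintype F]
    (hcard : Fintype.card ι < Fintype.card F) : ∃ (x : ι ↪ F) (y : F), ∀ j, x j ≠ y := by
  obtain ⟨e⟩ : Nonempty (Option ι ↪ F) :=
    Function.Embedding.nonempty_of_card_le (by simpa using hcard)
  exact ⟨⟨e ∘ some, e.injective.comp (Option.some_injective ι)⟩, e none,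
    fun j h => Option.some_ne_none j (e.injective h)⟩

theorem stmt_1_general (n k : ℕ)
    (S : Fin k → Finset (Fin n))
    (hsize : ∀ i : Fin k, (S i).card ≤ i.val)
    (F : Type) [Field F] [Fintype F] (hcard : n + 1 ≤ Fintype.card F) :
    ∃ A : Matrix (Fin k) (Fin n) F,
      (∀ g : Fin k → Fin n, Function.Injective g → (A.submatrix id g).det ≠ 0) ∧
      (∀ (i : Fin k) (j : Fin n), A i j = 0 ↔ j ∈ S i) := by
  obtain ⟨x, y, hy⟩ := exists_embedding_and_forall_ne (ι := Fin n) (by simpa using hcard)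
  let P : Fin k → F[X] := fun i => paddedVanishingPoly x y (S i) i
  refine ⟨Matrix.of fun i j => (P i).eval (x j), fun g hg => ?_, fun i j => ?_⟩
  · exact det_eval_monic_ne_zero
      (fun i => natDegree_paddedVanishingPoly x y (hsize i))
      (fun i => monic_paddedVanishingPoly x y (S i) i) (x.injective.comp hg)
  · exact eval_paddedVanishingPoly_eq_zero_iff x.injective hy (S i) i j

/-- Let `n, k` be positive integers and `S = {S_1, ..., S_k}` a set system with
`S_i ⊆ [n]` and `|S_i| ≤ i - 1` for all `i ∈ [k]` (zero-indexed: `|S i| ≤ i`).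
Then over any finite field of size at least `n + 1` there exists a `k × n` MDS matrix `A`
(every `k × k` submatrix is invertible) with `A i j = 0` iff `j ∈ S_i`. -/
theorem stmt_1 (n k : ℕ) (hn : 0 < n) (hk : 0 < k)
    (S : Fin k → Finset (Fin n))
    (hsize : ∀ i : Fin k, (S i).card ≤ i.val)
    (F : Type) [Field F] [Fintype F] (hcard : n + 1 ≤ Fintype.card F) :
    ∃ A : Matrix (Fin k) (Fin n) F,
      (∀ g : Fin k → Fin n, Function.Injective g → (A.submatrix id g).det ≠ 0) ∧
      (∀ (i : Fin k) (j : Fin n), A i j = 0 ↔ j ∈ S i) :=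
  stmt_1_general n k S hsize F hcard
end

section
/- Let ξ ∈ [n] and let S be a multiset with |S| ≤ k-1 whose elements are from [n]. Let Q = {x^{k-2}(x - x_ξ), x^{k-3}(x - x_ξ), ..., x(x - x_ξ), x - x_ξ, p(S)} ⊆ F_q(x_1,...,x_n)[x]. Then det(C(Q)) = ∏_{i ∈ S} (x_ξ - x_i). In particular, det(C(Q)) is nonzero in F_q(x_1,...,x_n) if and only if ξ ∉ S. -/
/-- The variable `x_i`, viewed as an element of the rational function field
`F_q(x_1, ..., x_n) = Frac(F_q[x_1, ..., x_n])`. -/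
noncomputable def xvar (F : Type) [Field F] (n : ℕ) (i : Fin n) :
    FractionRing (MvPolynomial (Fin n) F) :=
  algebraMap (MvPolynomial (Fin n) F) (FractionRing (MvPolynomial (Fin n) F)) (MvPolynomial.X i)

/-- For a multiset `S` with elements from `[n]`, the polynomial
`p(S) = ∏_{i ∈ S} (x - x_i)` in `F_q(x_1, ..., x_n)[x]` (with multiplicity). -/
noncomputable def polyOfMultiset (F : Type) [Field F] (n : ℕ) (S : Multiset (Fin n)) :
    Polynomial (FractionRing (MvPolynomial (Fin n) F)) :=
  (S.map fun i => Polynomial.X - Polynomial.C (xvar F n i)).prod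

/-- The coefficient matrix `C(P)` of a family of `k` polynomials of degree at most `k - 1`:
`C(P)_{i,j} = c_{i,j}` where `p_i(x) = c_{i,1} x^{k-1} + ... + c_{i,k-1} x + c_{i,k}`;
with zero-indexed `j : Fin k`, the `(i, j)` entry is the coefficient of `x^(k-1-j)` in `p_i`. -/
noncomputable def coeffMatrix {K : Type} [Field K] (k : ℕ) (p : Fin k → Polynomial K) :
    Matrix (Fin k) (Fin k) K :=
  fun i j => (p i).coeff (k - 1 - j.val)

/-- The family `Q = {x^{k-2}(x - x_ξ), x^{k-3}(x - x_ξ), ..., x(x - x_ξ), x - x_ξ, p(S)}`: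
row `i < k - 1` (zero-indexed) is `x^{k-2-i} (x - x_ξ)`, and the last row is `p(S)`. -/
noncomputable def Qfamily (F : Type) [Field F] (n k : ℕ) (ξ : Fin n) (S : Multiset (Fin n)) :
    Fin k → Polynomial (FractionRing (MvPolynomial (Fin n) F)) :=
  fun i =>
    if i.val < k - 1 then
      Polynomial.X ^ (k - 2 - i.val) * (Polynomial.X - Polynomial.C (xvar F n ξ))
    else polyOfMultiset F n S

/-! Subtracting `p(S)(x_ξ)` from the last polynomial `p(S)` leaves a multiple of `x - x_ξ` of
degree `< k`, i.e. a linear combination of the first `k - 1` polynomials of `Q`; so replacing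
`p(S)` by the constant `p(S)(x_ξ)` does not change the determinant, and makes `C(Q)` upper
triangular with diagonal `1, …, 1, p(S)(x_ξ) = ∏_{i ∈ S} (x_ξ - x_i)`. -/

open Polynomial Function

theorem AlternatingMap.map_update_add_of_mem_span {R M N ι : Type*} [CommRing R]
    [AddCommGroup M] [Module R M] [AddCommGroup N] [Module R N] [DecidableEq ι]
    (f : M [⋀^ι]→ₗ[R] N) (v : ι → M) (i : ι) (x : M) {w : M}
    (hw : w ∈ Submodule.span R (v '' {i}ᶜ)) :
    f (update v i (x + w)) = f (update v i x) := by
  suffices f (update v i w) = 0 by rw [f.map_update_add, this, add_zero]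
  induction hw using Submodule.span_induction with
  | mem y hy =>
    obtain ⟨j, hj, rfl⟩ := hy
    exact f.map_update_self v (Ne.symm hj)
  | zero => exact f.map_update_zero v i
  | add y z _ _ hy hz => rw [f.map_update_add, hy, hz, add_zero]
  | smul c y _ hy => rw [f.map_update_smul, hy, smul_zero]

section CoeffMatrix

variable {K : Type} [Field K]

noncomputable def coeffRow (k : ℕ) : K[X] →ₗ[K] Fin k → K where
  toFun f j := f.coeff (k - 1 - j.val)
  map_add' f g := by ext; simp
  map_smul' c f := by ext; simp

theorem det_coeffMatrix_update_add_of_mem_span {k : ℕ} (p : Fin k → K[X]) (i : Fin k)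
    (g : K[X]) {f : K[X]} (hf : f ∈ Submodule.span K (p '' {i}ᶜ)) :
    (coeffMatrix k (update p i (g + f))).det = (coeffMatrix k (update p i g)).det :=
  (Matrix.detRowAlternating.compLinearMap (coeffRow k)).map_update_add_of_mem_span p i g hf

theorem det_coeffMatrix_of_natDegree_le {k : ℕ} (p : Fin k → K[X])
    (hp : ∀ i, (p i).natDegree ≤ k - 1 - i.val) :
    (coeffMatrix k p).det = ∏ i, (p i).coeff (k - 1 - i.val) := by
  refine Matrix.det_of_isUpperTriangular fun i j hji => coeff_eq_zero_of_natDegree_lt ?_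
  have := hp i
  have : j.val < i.val := hji
  omega

end CoeffMatrix

theorem mem_span_X_pow_mul_of_dvd {R : Type*} [CommRing R] {g f : R[X]} (hg : g.Monic)
    (hdvd : g ∣ f) {m : ℕ} (hf : f.natDegree < g.natDegree + m) :
    f ∈ Submodule.span R ((fun l => X ^ l * g) '' Set.Iio m) := by
  obtain ⟨q, rfl⟩ := hdvd
  rcases eq_or_ne q 0 with rfl | hq
  · rw [mul_zero]
    exact Submodule.zero_mem _
  rw [hg.natDegree_mul' hq] at hf
  rw [as_sum_range' q m (by omega), Finset.mul_sum]
  refine Submodule.sum_mem _ fun l hl => ?_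
  rw [← C_mul_X_pow_eq_monomial, show g * (C (q.coeff l) * X ^ l) = q.coeff l • (X ^ l * g) by
    rw [smul_eq_C_mul]; ring]
  exact Submodule.smul_mem _ _ (Submodule.subset_span ⟨l, Finset.mem_range.mp hl, rfl⟩)

section XSubCFamily

variable {K : Type} [Field K]

-- `Qfamily F n k ξ S` is definitionally `xSubCFamily k (xvar F n ξ) (polyOfMultiset F n S)`.
noncomputable def xSubCFamily (k : ℕ) (a : K) (p : K[X]) : Fin k → K[X] :=
  fun i => if i.val < k - 1 then X ^ (k - 2 - i.val) * (X - C a) else p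

theorem xSubCFamily_castSucc {m : ℕ} (a : K) (p : K[X]) (i : Fin m) :
    xSubCFamily (m + 1) a p i.castSucc = X ^ (m - 1 - i.val) * (X - C a) := by
  simp [xSubCFamily]

theorem xSubCFamily_last (m : ℕ) (a : K) (p : K[X]) :
    xSubCFamily (m + 1) a p (Fin.last m) = p := by
  simp [xSubCFamily]

theorem monic_xSubCFamily_castSucc {m : ℕ} (a : K) (p : K[X]) (i : Fin m) :
    (xSubCFamily (m + 1) a p i.castSucc).Monic := by
  rw [xSubCFamily_castSucc]
  exact (monic_X_pow _).mul (monic_X_sub_C a)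

theorem natDegree_xSubCFamily_castSucc {m : ℕ} (a : K) (p : K[X]) (i : Fin m) :
    (xSubCFamily (m + 1) a p i.castSucc).natDegree = m - i.val := by
  rw [xSubCFamily_castSucc, (monic_X_pow _).natDegree_mul (monic_X_sub_C a), natDegree_X_pow,
    natDegree_X_sub_C]
  omega

theorem sub_C_eval_mem_span_xSubCFamily {m : ℕ} (a : K) {p : K[X]} (hp : p.natDegree < m + 1) :
    p - C (p.eval a) ∈ Submodule.span K (xSubCFamily (m + 1) a p '' {Fin.last m}ᶜ) := by
  refine Submodule.span_mono ?_ (mem_span_X_pow_mul_of_dvd (m := m) (monic_X_sub_C a)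
    X_sub_C_dvd_sub_C_eval (by rw [natDegree_sub_C, natDegree_X_sub_C]; omega))
  rintro _ ⟨l, hl, rfl⟩
  have hl : l < m := hl
  refine ⟨(⟨m - 1 - l, by omega⟩ : Fin m).castSucc, Fin.castSucc_ne_last _, ?_⟩
  rw [xSubCFamily_castSucc]
  congr 2
  show m - 1 - (m - 1 - l) = l
  omega

theorem det_coeffMatrix_xSubCFamily {k : ℕ} (a : K) {p : K[X]} (hp : p.natDegree < k) :
    (coeffMatrix k (xSubCFamily k a p)).det = p.eval a := by
  obtain ⟨m, rfl⟩ : ∃ m, k = m + 1 := ⟨k - 1, by omega⟩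
  have hQ : xSubCFamily (m + 1) a p =
      update (xSubCFamily (m + 1) a p) (Fin.last m) (C (p.eval a) + (p - C (p.eval a))) := by
    rw [add_sub_cancel, eq_comm, update_eq_self_iff, xSubCFamily_last]
  rw [hQ, det_coeffMatrix_update_add_of_mem_span _ _ _ (sub_C_eval_mem_span_xSubCFamily a hp),
    det_coeffMatrix_of_natDegree_le]
  · have hdiag (i : Fin m) : (xSubCFamily (m + 1) a p i.castSucc).coeff (m - i.val) = 1 := by
      rw [← natDegree_xSubCFamily_castSucc a p i]
      exact monic_xSubCFamily_castSucc a p i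
    simp [Fin.prod_univ_castSucc, Fin.castSucc_ne_last, hdiag]
  · intro i
    induction i using Fin.lastCases with
    | last => simp
    | cast i => simp [Fin.castSucc_ne_last, natDegree_xSubCFamily_castSucc]

end XSubCFamily

theorem xvar_injective (F : Type) [Field F] (n : ℕ) : Injective (xvar F n) :=
  fun _ _ h => MvPolynomial.X_injective (IsFractionRing.injective _ _ h)

theorem natDegree_polyOfMultiset (F : Type) [Field F] (n : ℕ) (S : Multiset (Fin n)) :
    (polyOfMultiset F n S).natDegree = S.card := by
  simpa [polyOfMultiset] using natDegree_multiset_prod_X_sub_C_eq_card (S.map (xvar F n))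

theorem eval_polyOfMultiset (F : Type) [Field F] (n : ℕ) (S : Multiset (Fin n))
    (a : FractionRing (MvPolynomial (Fin n) F)) :
    (polyOfMultiset F n S).eval a = (S.map fun i => a - xvar F n i).prod := by
  simp [polyOfMultiset, eval_multiset_prod, Multiset.map_map]

theorem stmt_3_general (F : Type) [Field F] (n k : ℕ) (hk : 1 ≤ k)
    (ξ : Fin n) (S : Multiset (Fin n)) (hS : S.card ≤ k - 1) :
    (coeffMatrix k (Qfamily F n k ξ S)).det =
        (S.map fun i => xvar F n ξ - xvar F n i).prod ∧
      ((coeffMatrix k (Qfamily F n k ξ S)).det ≠ 0 ↔ ξ ∉ S) := by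
  have hdet : (coeffMatrix k (Qfamily F n k ξ S)).det =
      (S.map fun i => xvar F n ξ - xvar F n i).prod := by
    rw [← eval_polyOfMultiset]
    exact det_coeffMatrix_xSubCFamily _ (by rw [natDegree_polyOfMultiset]; omega)
  refine ⟨hdet, ?_⟩
  rw [hdet, Ne, Multiset.prod_eq_zero_iff, Multiset.mem_map, not_iff_not]
  simp [sub_eq_zero, (xvar_injective F n).eq_iff]

/-- Let `ξ ∈ [n]` and let `S` be a multiset with `|S| ≤ k - 1` and elements
from `[n]`.  Let `Q = {x^{k-2}(x - x_ξ), ..., x(x - x_ξ), x - x_ξ, p(S)}`.  Then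
`det C(Q) = ∏_{i ∈ S} (x_ξ - x_i)`; in particular `det C(Q) ≠ 0` iff `ξ ∉ S`. -/
theorem stmt_3 (F : Type) [Field F] [Fintype F] (n k : ℕ) (hk : 1 ≤ k)
    (ξ : Fin n) (S : Multiset (Fin n)) (hS : S.card ≤ k - 1) :
    (coeffMatrix k (Qfamily F n k ξ S)).det =
        (S.map fun i => xvar F n ξ - xvar F n i).prod ∧
      ((coeffMatrix k (Qfamily F n k ξ S)).det ≠ 0 ↔ ξ ∉ S) :=
  stmt_3_general F n k hk ξ S hS
end

section
/- Let S_1, S_2, ..., S_k be multisets, each of size at most k-1 and with all elements from [n], and let P = {p(S_1), ..., p(S_k)} ⊆ F_q(x_1,...,x_n)[x]. Suppose there exists ξ ∈ [n] such that ξ belongs to the multiset intersection S_1 ∩ ... ∩ S_{k-1}. Then C(P) = B · C(Q), where B is the k×k block-diagonal matrix with top-left (k-1)×(k-1) block C(P') and bottom-right 1×1 block equal to 1 (and zeros elsewhere), P' = {p(S_1 \ {ξ}), ..., p(S_{k-1} \ {ξ})} (multiset difference, with coefficient matrix of size (k-1)×(k-1)), and Q = {x^{k-2}(x - x_ξ),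 x^{k-3}(x - x_ξ), ..., x(x - x_ξ), x - x_ξ, p(S_k)}. -/
lemma polyOfMultiset_factor (F : Type) [Field F] (n : ℕ) (S : Multiset (Fin n))
    (ξ : Fin n) (h : ξ ∈ S) :
    polyOfMultiset F n S =
      (Polynomial.X - Polynomial.C (xvar F n ξ)) * polyOfMultiset F n (S - {ξ}) := by
  rw [Multiset.sub_singleton]
  conv_lhs => rw [← Multiset.cons_erase h]
  unfold polyOfMultiset
  rw [Multiset.map_cons, Multiset.prod_cons]

lemma polyOfMultiset_natDegree_le (F : Type) [Field F] (n : ℕ) (S : Multiset (Fin n)) :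
    (polyOfMultiset F n S).natDegree ≤ Multiset.card S := by
  unfold polyOfMultiset
  refine le_trans (Polynomial.natDegree_multiset_prod_le _) ?_
  rw [Multiset.map_map]
  simp [Function.comp, Polynomial.natDegree_X_sub_C]

lemma sum_range_rev_fin {M : Type*} [AddCommMonoid M] (m : ℕ) (f : ℕ → M) :
    ∑ r ∈ Finset.range m, f r = ∑ t : Fin m, f (m - 1 - t.val) := by
  rw [← Finset.sum_range_reflect]
  exact (Fin.sum_univ_eq_sum_range (fun j => f (m - 1 - j)) m).symm

/-- Let `S_1, ..., S_k` be multisets of size at most `k - 1` with elements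
from `[n]` and let `P = {p(S_1), ..., p(S_k)}`.  Suppose `ξ ∈ S_1 ∩ ... ∩ S_{k-1}` (multiset
intersection).  Then `C(P) = B ⬝ C(Q)`, where `B` is the block-diagonal matrix with top-left
`(k-1) × (k-1)` block `C(P')`, bottom-right entry `1` and zeros elsewhere,
`P' = {p(S_1 \ {ξ}), ..., p(S_{k-1} \ {ξ})}` (multiset difference) and
`Q = {x^{k-2}(x - x_ξ), ..., x - x_ξ, p(S_k)}`. -/
theorem stmt_4 (F : Type) [Field F] [Fintype F] (n k : ℕ) (hk : 1 ≤ k)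
    (S : Fin k → Multiset (Fin n))
    (hsize : ∀ i : Fin k, (S i).card ≤ k - 1)
    (ξ : Fin n) (hξ : ∀ i : Fin k, i.val < k - 1 → ξ ∈ S i) :
    coeffMatrix k (fun i => polyOfMultiset F n (S i)) =
      (Matrix.of fun i j : Fin k =>
        if hi : i.val < k - 1 then
          (if hj : j.val < k - 1 then
            coeffMatrix (k - 1)
              (fun t : Fin (k - 1) => polyOfMultiset F n (S ⟨t.val, by omega⟩ - {ξ}))
              ⟨i.val, hi⟩ ⟨j.val, hj⟩
          else 0)
        else (if j.val < k - 1 then 0 else 1)) *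
      coeffMatrix k (Qfamily F n k ξ (S ⟨k - 1, by omega⟩)) := by
  obtain ⟨m, rfl⟩ : ∃ m, k = m + 1 := ⟨k - 1, by omega⟩
  have h1 : m + 1 - 1 = m := rfl
  have h2 : m + 1 - 2 = m - 1 := by omega
  ext i j
  rw [Matrix.mul_apply, Fin.sum_univ_castSucc]
  simp only [Matrix.of_apply, coeffMatrix, Qfamily, Fin.coe_castSucc, Fin.val_last, h1, h2,
    Fin.is_lt, dite_true, if_true, lt_irrefl, dite_false, if_false, Fin.eta, mul_zero, zero_mul]
  by_cases hi : i.val < m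
  · simp only [hi, dite_true, Fin.is_lt, if_true, mul_zero, add_zero]
    set c := xvar F n ξ with hc
    set p' := polyOfMultiset F n (S i - {ξ}) with hp'
    have hmem : ξ ∈ S i := hξ i (by omega)
    have hdeg : p'.natDegree < m := by
      refine lt_of_le_of_lt (polyOfMultiset_natDegree_le F n _) ?_
      rw [Multiset.sub_singleton, Multiset.card_erase_of_mem hmem, Nat.pred_eq_sub_one]
      have := hsize i
      have hpos : 0 < Multiset.card (S i) := Multiset.card_pos_iff_exists_mem.mpr ⟨ξ, hmem⟩
      omega
    have expand : (Polynomial.X - Polynomial.C c) * p' =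
        ∑ r ∈ Finset.range m,
          Polynomial.C (p'.coeff r) * (Polynomial.X ^ r * (Polynomial.X - Polynomial.C c)) := by
      conv_lhs => rw [mul_comm, Polynomial.as_sum_range' p' m hdeg]
      rw [Finset.sum_mul]
      exact Finset.sum_congr rfl fun r _ => by
        rw [← Polynomial.C_mul_X_pow_eq_monomial, mul_assoc]
    rw [polyOfMultiset_factor F n (S i) ξ hmem, ← hp', expand, Polynomial.finset_sum_coeff]
    simp only [Polynomial.coeff_C_mul]
    rw [zero_mul, add_zero, sum_range_rev_fin]
  · have him : i = ⟨m, by omega⟩ := Fin.ext (by simpa using by omega : i.val = m)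
    simp only [hi, dite_false, Fin.is_lt, if_true, zero_mul, Finset.sum_const_zero, zero_add,
      lt_irrefl, if_false, one_mul, him]
end

section
/- Let k, n be positive integers and let S_1, ..., S_k ⊆ [n] satisfy |S_i| ≤ i - 1 for all i ∈ [k]. Let F be a field and let a_1, ..., a_{n+1} be distinct elements of F. Then the polynomials r_1, ..., r_k ∈ F[x], where r_i(x) = (x - a_{n+1})^{k-i} · ∏_{λ ∈ S_i} (x - a_λ), are linearly independent over F. -/
open Polynomial

/-- Let `k, n` be positive integers and `S_1, ..., S_k ⊆ [n]` with
`|S_i| ≤ i - 1` for all `i ∈ [k]` (zero-indexed: `|S i| ≤ i`).  Let `F` be a field and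
`a_1, ..., a_{n+1}` distinct elements of `F`.  Then the polynomials
`r_i(x) = (x - a_{n+1})^{k-i} ∏_{λ ∈ S_i} (x - a_λ)` are linearly independent over `F`. -/
theorem stmt_6 (n k : ℕ) (hn : 0 < n) (hk : 0 < k)
    (S : Fin k → Finset (Fin n))
    (hsize : ∀ i : Fin k, (S i).card ≤ i.val)
    (F : Type) [Field F] (a : Fin (n + 1) → F) (ha : Function.Injective a) :
    LinearIndependent F
      (fun i : Fin k =>
        (Polynomial.X - Polynomial.C (a (Fin.last n))) ^ (k - (i.val + 1)) *
          ∏ l ∈ S i, (Polynomial.X - Polynomial.C (a l.castSucc))) := by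
  set c := a (Fin.last n) with hc
  set p : Fin k → F[X] := fun i => ∏ l ∈ S i, (X - C (a l.castSucc)) with hp
  rw [Fintype.linearIndependent_iff]
  intro g hg
  classical
  by_contra hne
  push_neg at hne
  obtain ⟨i0, hi0⟩ := hne
  have hsne : (Finset.univ.filter (fun j => g j ≠ 0)).Nonempty :=
    ⟨i0, by simp [hi0]⟩
  set i := (Finset.univ.filter (fun j => g j ≠ 0)).max' hsne with hi
  have hgi : g i ≠ 0 := by
    have := (Finset.univ.filter (fun j => g j ≠ 0)).max'_mem hsne
    simpa using this
  have hmax : ∀ j : Fin k, g j ≠ 0 → j ≤ i := fun j hj =>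
    Finset.le_max' _ j (by simp [hj])
  -- the inner sum
  set t : Fin k → F[X] := fun j =>
    if j.val ≤ i.val then C (g j) * (X - C c) ^ (i.val - j.val) * p j else 0 with ht
  have key : (X - C c) ^ (k - (i.val + 1)) * (∑ j, t j) = 0 := by
    rw [Finset.mul_sum, ← hg]
    refine Finset.sum_congr rfl fun j _ => ?_
    by_cases hji : j.val ≤ i.val
    · simp only [ht, if_pos hji, smul_eq_C_mul]
      rw [show k - (j.val + 1) = (k - (i.val + 1)) + (i.val - j.val) from by
        have := i.isLt; omega, pow_add]
      ring
    · have : g j = 0 := by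
        by_contra h
        exact hji (hmax j h)
      simp [ht, if_neg hji, this]
  have hXc : (X - C c : F[X]) ≠ 0 := X_sub_C_ne_zero c
  have hsum : (∑ j, t j) = 0 := by
    rcases mul_eq_zero.mp key with h | h
    · exact absurd h (pow_ne_zero _ hXc)
    · exact h
  have heval : eval c (∑ j, t j) = g i * eval c (p i) := by
    rw [eval_finset_sum]
    rw [Finset.sum_eq_single i]
    · simp [ht]
    · intro j _ hji
      by_cases h : j.val ≤ i.val
      · have hlt : j.val < i.val := lt_of_le_of_ne h (by
          intro heq; exact hji (Fin.ext heq))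
        have h1 : t j = C (g j) * (X - C c) ^ (i.val - j.val) * p j := if_pos h
        rw [h1]
        simp [zero_pow (show i.val - j.val ≠ 0 by omega)]
      · have h1 : t j = 0 := if_neg h
        simp [h1]
    · intro h; exact absurd (Finset.mem_univ i) h
  have hpne : eval c (p i) ≠ 0 := by
    rw [hp]
    simp only [eval_prod, eval_sub, eval_X, eval_C]
    rw [Finset.prod_ne_zero_iff]
    intro l _
    rw [sub_ne_zero]
    intro h
    have := ha h
    exact absurd this.symm (Fin.castSucc_lt_last l).ne
  rw [hsum] at heval
  simp only [eval_zero] at heval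
  exact hgi (by
    rcases mul_eq_zero.mp heval.symm with h | h
    · exact h
    · exact absurd h hpne)
end

section
/- Let b ≥ 2 be an integer. Then the set W_b = {w_1, ..., w_{2b}} ⊆ ℕ^{2b-1}, where w_i(j) = 2b-1 if j = i and 0 otherwise for i ∈ [2b-1], and w_{2b} = (1,1,...,1), satisfies property V_{2b-1}(2b). -/
/-- Let `b ≥ 2`.  The set `W_b = {w_1, ..., w_{2b}} ⊆ ℕ^{2b-1}`, where for
`i ∈ [2b-1]` the vector `w_i` has `j`-th entry `2b - 1` if `j = i` and `0` otherwise, and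
`w_{2b} = (1, 1, ..., 1)`, satisfies property `V_{2b-1}(2b)`:
(I) `|w_i| ≤ 2b - 1` for all `i`;
(II) for every nonempty `I ⊆ [2b]`, `∑_{i∈I} (2b - |w_i|) + |μ_{W_b}(I)| ≤ 2b`;
(III) `w_i ∈ {0,1}^{(2b-1)-(2b-1)} × ℕ^{2b-1}` (vacuous). -/
theorem stmt_11 (b : ℕ) (hb : 2 ≤ b)
    (w : Fin (2 * b) → Fin (2 * b - 1) → ℕ)
    (hw : ∀ i j, w i j =
      if i.val < 2 * b - 1 then (if j.val = i.val then 2 * b - 1 else 0) else 1) :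
    (∀ i, ∑ j, w i j ≤ 2 * b - 1) ∧
    (∀ (I : Finset (Fin (2 * b))) (hne : I.Nonempty),
      (∑ i ∈ I, (2 * b - ∑ j, w i j)) + ∑ j, I.inf' hne (fun i => w i j) ≤ 2 * b) ∧
    (∀ i (j : Fin (2 * b - 1)), j.val < (2 * b - 1) - (2 * b - 1) → w i j ≤ 1) := by
  have hrow : ∀ i, ∑ j, w i j = 2 * b - 1 := by
    intro i
    by_cases h : i.val < 2 * b - 1
    · have heq : ∑ j, w i j
        = ∑ j : Fin (2*b-1), if j = (⟨i.val, h⟩ : Fin (2*b-1)) then 2*b-1 else 0 := by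
        apply Finset.sum_congr rfl
        intro j _
        rw [hw]
        simp [h, Fin.ext_iff]
      rw [heq, Finset.sum_ite_eq' Finset.univ]
      simp
    · have heq : ∑ j, w i j = ∑ _j : Fin (2*b-1), 1 := by
        apply Finset.sum_congr rfl; intro j _; rw [hw]; simp [h]
      rw [heq]; simp
  refine ⟨fun i => le_of_eq (hrow i), ?_, ?_⟩
  · intro I hne
    have hterm : ∀ i ∈ I, 2*b - ∑ j, w i j = 1 := by
      intro i _; rw [hrow i]; omega
    rw [Finset.sum_congr rfl hterm, Finset.sum_const, smul_eq_mul, mul_one]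
    by_cases hA : ∃ i ∈ I, ∃ i' ∈ I, i ≠ i' ∧ i.val < 2*b-1 ∧ i'.val < 2*b-1
    · obtain ⟨i, hi, i', hi', hne', h1, h2⟩ := hA
      have hv : i.val ≠ i'.val := fun h => hne' (Fin.ext h)
      have hS : ∑ j, I.inf' hne (fun i => w i j) = 0 := by
        apply Finset.sum_eq_zero
        intro j _
        rcases eq_or_ne j.val i.val with hj | hj
        · have hle := Finset.inf'_le (fun i => w i j) hi'
          have hz : w i' j = 0 := by
            rw [hw]
            have hne2 : ¬ j.val = i'.val := by omega
            simp [h2, hne2]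
          rw [hz] at hle; omega
        · have hle := Finset.inf'_le (fun i => w i j) hi
          have hz : w i j = 0 := by rw [hw]; simp [h1, hj]
          rw [hz] at hle; omega
      rw [hS]
      have hcard : I.card ≤ 2 * b := by simpa using Finset.card_le_univ I
      omega
    · push_neg at hA
      rcases eq_or_lt_of_le (Finset.one_le_card.mpr hne) with hc | hc
      · obtain ⟨i, rfl⟩ := Finset.card_eq_one.mp hc.symm
        simp only [Finset.card_singleton, Finset.inf'_singleton]
        rw [hrow i]
        omega
      · obtain ⟨x, hx, y, hy, hxy⟩ := Finset.one_lt_card.mp hc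
        have hxlt := x.isLt
        have hylt := y.isLt
        have key : ∃ i0 ∈ I, ∃ z ∈ I, i0.val < 2*b-1 ∧ z.val = 2*b-1 := by
          rcases lt_or_ge x.val (2*b-1) with h1 | h1
          · refine ⟨x, hx, y, hy, h1, ?_⟩
            have := hA x hx y hy hxy h1
            omega
          · rcases lt_or_ge y.val (2*b-1) with h2 | h2
            · exact ⟨y, hy, x, hx, h2, by omega⟩
            · exact absurd (Fin.ext (by omega : x.val = y.val)) hxy
        obtain ⟨i0, hi0, z, hz, hi0n, hzn⟩ := key
        have hsub : I ⊆ {i0, z} := by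
          intro u hu
          rcases lt_or_ge u.val (2*b-1) with h1 | h1
          · have : u = i0 := by
              by_contra hne2
              have := hA u hu i0 hi0 hne2 h1
              omega
            simp [this]
          · have := u.isLt
            have : u = z := Fin.ext (by omega)
            simp [this]
        have hcard : I.card ≤ 2 :=
          le_trans (Finset.card_le_card hsub)
            (le_trans (Finset.card_insert_le _ _) (by simp))
        have hS : ∑ j, I.inf' hne (fun i => w i j) ≤ 1 := by
          have hb1 : ∀ j : Fin (2*b-1),
              I.inf' hne (fun i => w i j)
                ≤ if j = (⟨i0.val, hi0n⟩ : Fin (2*b-1)) then 1 else 0 := by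
            intro j
            by_cases hj : j = (⟨i0.val, hi0n⟩ : Fin (2*b-1))
            · rw [if_pos hj]
              have hle := Finset.inf'_le (fun i => w i j) hz
              have h1 : w z j = 1 := by
                rw [hw]
                have : ¬ z.val < 2*b-1 := by omega
                simp [this]
              rw [h1] at hle; exact hle
            · rw [if_neg hj]
              have hle := Finset.inf'_le (fun i => w i j) hi0
              have hjv : ¬ j.val = i0.val := fun h => hj (Fin.ext h)
              have h0 : w i0 j = 0 := by rw [hw]; simp [hi0n, hjv]
              rw [h0] at hle; omega
          calc ∑ j, I.inf' hne (fun i => w i j)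
              ≤ ∑ j : Fin (2*b-1), if j = (⟨i0.val, hi0n⟩ : Fin (2*b-1)) then 1 else 0 :=
                Finset.sum_le_sum (fun j _ => hb1 j)
            _ = 1 := by rw [Finset.sum_ite_eq' Finset.univ]; simp
        omega
  · intro i j h
    exact absurd h (by omega)
end

section
/- Let b ≥ 2 be an integer. The 2b polynomials p_1, ..., p_{2b} ∈ F_q(x_1, ..., x_{2b-1})[x], where p_i(x) = (x - x_i)^{2b-1} for i ∈ [2b-1] and p_{2b}(x) = ∏_{i=1}^{2b-1}(x - x_i), are linearly dependent over F_q(x_1, ..., x_{2b-1}), for any finite field F_q. -/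
/-!
With `n = 2b - 1` and `y_i = x_i`, look for `c` with `∑ c_i (x - y_i)^n = (∑ c_i) ∏ (x - y_j)`.
The difference of the two sides has degree `< n`, so it vanishes iff it vanishes at the `n`
distinct points `y_j`, i.e. iff `c` is in the kernel of the matrix `((y_j - y_i)^n)`. Since `n`
is odd this matrix is alternating of odd size, so its determinant is zero (in every
characteristic) and a nonzero `c` exists.
-/

open Polynomial

theorem Matrix.det_eq_zero_of_odd_card_of_alternating {ι R : Type*} [Fintype ι] [DecidableEq ι]
    [CommRing R] (hι : Odd (Fintype.card ι)) (M : Matrix ι ι R)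
    (hskew : ∀ i j, M i j = -M j i) (hdiag : ∀ i, M i i = 0) : M.det = 0 := by
  rw [Matrix.det_apply]
  -- the terms of `σ` and `σ⁻¹` cancel, and an involution of an odd set has a fixed point
  refine Finset.sum_ninvolution (fun σ => σ⁻¹) (fun σ => ?_) (fun σ hσ hσinv => hσ ?_)
    (fun _ => Finset.mem_univ _) inv_inv
  · have hprod : ∏ i, M (σ⁻¹ i) i = -∏ i, M (σ i) i := by
      calc ∏ i, M (σ⁻¹ i) i = ∏ i, M i (σ i) := by
            rw [← Equiv.prod_comp σ]; simp
        _ = ∏ i, (-1) * M (σ i) i := Finset.prod_congr rfl fun i _ => by rw [hskew]; ring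
        _ = -∏ i, M (σ i) i := by
            rw [Finset.prod_mul_distrib, Finset.prod_const, Finset.card_univ, hι.neg_one_pow,
              neg_one_mul]
    rw [Equiv.Perm.sign_inv, hprod, smul_neg, add_neg_cancel]
  · have : Fact (Nat.Prime 2) := ⟨Nat.prime_two⟩
    have hσ2 : σ ^ 2 ^ 1 = 1 := by
      rw [pow_one, sq, ← inv_mul_cancel σ, hσinv]
    obtain ⟨a, ha⟩ := Equiv.Perm.exists_fixed_point_of_prime hι.not_two_dvd_nat hσ2
    rw [Finset.prod_eq_zero (Finset.mem_univ a) (by rw [ha, hdiag]), smul_zero]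

theorem Polynomial.Monic.degree_sub_lt {R : Type*} [CommRing R] [Nontrivial R] {p q : R[X]}
    (hp : p.Monic) (hq : q.Monic) (h : p.degree = q.degree) : (p - q).degree < p.degree :=
  degree_sub_lt_left h hp.ne_zero (by rw [hp.leadingCoeff, hq.leadingCoeff])

theorem Polynomial.sum_smul_X_sub_C_pow_card_eq {ι R : Type*} [Fintype ι] [CommRing R]
    [IsDomain R] {y : ι → R} (hy : Function.Injective y) (c : ι → R)
    (hc : ∀ j, ∑ i, c i * (y j - y i) ^ Fintype.card ι = 0) :
    ∑ i, c i • (X - C (y i)) ^ Fintype.card ι = (∑ i, c i) • ∏ j, (X - C (y j)) := by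
  classical
  set n := Fintype.card ι with hn
  set Q : R[X] := ∏ j, (X - C (y j))
  have hQ : Q.Monic := monic_prod_of_monic _ _ fun j _ => monic_X_sub_C (y j)
  have hQdeg : Q.degree = n := by simp [Q, degree_prod, degree_X_sub_C, hn]
  have hdiff : (∑ i, c i • (X - C (y i)) ^ n) - (∑ i, c i) • Q
      = ∑ i, c i • ((X - C (y i)) ^ n - Q) := by
    simp only [smul_sub, Finset.sum_sub_distrib, Finset.sum_smul]
  refine eq_of_degree_sub_lt_of_eval_index_eq (s := Finset.univ) hy.injOn ?_ fun j _ => ?_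
  · rw [hdiff, Finset.card_univ, ← hn]
    refine (degree_sum_le _ _).trans_lt ((Finset.sup_lt_iff (WithBot.bot_lt_coe n)).mpr
      fun i _ => ?_)
    have hpow : ((X - C (y i)) ^ n).Monic := (monic_X_sub_C (y i)).pow n
    have hdeg : ((X - C (y i)) ^ n).degree = (n : WithBot ℕ) := by simp [degree_X_sub_C]
    calc (c i • ((X - C (y i)) ^ n - Q)).degree ≤ ((X - C (y i)) ^ n - Q).degree :=
          degree_smul_le _ _
      _ < (n : WithBot ℕ) := hdeg ▸ hpow.degree_sub_lt hQ (hdeg.trans hQdeg.symm)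
  · have hQj : Q.eval (y j) = 0 :=
      (eval_prod _ _ _).trans (Finset.prod_eq_zero (Finset.mem_univ j) (by simp))
    simp only [eval_finsetSum, eval_smul, eval_pow, eval_sub, eval_X, eval_C, hQj, smul_eq_mul,
      mul_zero, hc]

theorem Polynomial.exists_ne_zero_sum_smul_X_sub_C_pow_card_eq {ι R : Type*} [Fintype ι]
    [CommRing R] [IsDomain R] (hι : Odd (Fintype.card ι)) {y : ι → R}
    (hy : Function.Injective y) :
    ∃ c : ι → R, c ≠ 0 ∧
      ∑ i, c i • (X - C (y i)) ^ Fintype.card ι = (∑ i, c i) • ∏ j, (X - C (y j)) := by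
  classical
  let M : Matrix ι ι R := fun j i => (y j - y i) ^ Fintype.card ι
  have hM : M.det = 0 := M.det_eq_zero_of_odd_card_of_alternating hι
    (fun j i => by simp only [M, ← hι.neg_pow, neg_sub])
    (fun i => by simp [M, hι.pos.ne'])
  obtain ⟨c, hc0, hc⟩ := Matrix.exists_mulVec_eq_zero_iff.mpr hM
  refine ⟨c, hc0, sum_smul_X_sub_C_pow_card_eq hy c fun j => ?_⟩
  simpa [M, Matrix.mulVec, dotProduct, mul_comm] using congrFun hc j

theorem Polynomial.not_linearIndependent_X_sub_C_pow_and_prod {R : Type*} [CommRing R]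
    [IsDomain R] {m n : ℕ} (hn : Odd n) (hm : m = n + 1) {y : Fin n → R}
    (hy : Function.Injective y) :
    ¬ LinearIndependent R (fun i : Fin m =>
      if h : i.val < n then (X - C (y ⟨i, h⟩)) ^ n else ∏ j, (X - C (y j))) := by
  subst hm
  obtain ⟨c, hc0, hc⟩ := exists_ne_zero_sum_smul_X_sub_C_pow_card_eq (by simpa using hn) hy
  obtain ⟨j, hj⟩ := Function.ne_iff.mp hc0
  rw [Fintype.not_linearIndependent_iff]
  refine ⟨fun i => if h : i.val < n then c ⟨i, h⟩ else -∑ j, c j, ?_, j.castSucc,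
    by simpa using hj⟩
  simp only [Fintype.card_fin] at hc
  simp [Fin.sum_univ_castSucc, hc]

theorem stmt_12_general (F : Type) [Field F] (b : ℕ) (hb : 2 ≤ b) :
    ¬ LinearIndependent (FractionRing (MvPolynomial (Fin (2 * b - 1)) F))
      (fun i : Fin (2 * b) =>
        if h : i.val < 2 * b - 1 then
          (Polynomial.X - Polynomial.C (algebraMap (MvPolynomial (Fin (2 * b - 1)) F)
            (FractionRing (MvPolynomial (Fin (2 * b - 1)) F))
            (MvPolynomial.X ⟨i.val, h⟩))) ^ (2 * b - 1)
        else
          ∏ j : Fin (2 * b - 1),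
            (Polynomial.X - Polynomial.C (algebraMap (MvPolynomial (Fin (2 * b - 1)) F)
              (FractionRing (MvPolynomial (Fin (2 * b - 1)) F)) (MvPolynomial.X j)))) :=
  not_linearIndependent_X_sub_C_pow_and_prod (m := 2 * b) (n := 2 * b - 1)
    (y := fun j => algebraMap (MvPolynomial (Fin (2 * b - 1)) F) _ (MvPolynomial.X j))
    ⟨b - 1, by omega⟩ (by omega) ((IsFractionRing.injective _ _).comp MvPolynomial.X_injective)

/-- Let `b ≥ 2`.  The `2b` polynomials `p_1, ..., p_{2b}` in
`F_q(x_1, ..., x_{2b-1})[x]`, where `p_i(x) = (x - x_i)^{2b-1}` for `i ∈ [2b-1]` and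
`p_{2b}(x) = ∏_{i=1}^{2b-1} (x - x_i)`, are linearly dependent over
`F_q(x_1, ..., x_{2b-1})`, for any finite field `F_q`. -/
theorem stmt_12 (F : Type) [Field F] [Fintype F] (b : ℕ) (hb : 2 ≤ b) :
    ¬ LinearIndependent (FractionRing (MvPolynomial (Fin (2 * b - 1)) F))
      (fun i : Fin (2 * b) =>
        if h : i.val < 2 * b - 1 then
          (Polynomial.X - Polynomial.C (algebraMap (MvPolynomial (Fin (2 * b - 1)) F)
            (FractionRing (MvPolynomial (Fin (2 * b - 1)) F))
            (MvPolynomial.X ⟨i.val, h⟩))) ^ (2 * b - 1)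
        else
          ∏ j : Fin (2 * b - 1),
            (Polynomial.X - Polynomial.C (algebraMap (MvPolynomial (Fin (2 * b - 1)) F)
              (FractionRing (MvPolynomial (Fin (2 * b - 1)) F)) (MvPolynomial.X j)))) :=
  stmt_12_general F b hb
end

section
/- Let b ≥ 2 be an integer, let e_t = e_t(x_1,...,x_{2b-1}) denote the elementary symmetric polynomial of degree t in the variables x_1,...,x_{2b-1} (with e_0 = 1), let L = lcm(C(2b-1,0), C(2b-1,1), ..., C(2b-1,b-1)) where C(·,·) denotes binomial coefficients, and for j ∈ [b] let c(j) = L / C(2b-1, j-1), with c(j) = c(2b+1-j) for j ∈ {b+1,...,2b}. Define the 2b×2b matrix M over the polynomial ring ℤ[x_1,...,x_{2b-1}] by M_{i,j} = C(2b-1, j-1)·(-x_i)^{j-1} for i ∈ [2b-1] and M_{2b,j} = (-1)^{j-1}·e_{j-1}, and the column vector u of length 2b by u(j) = c(j)·e_{2b-j}. Then M·u = 0. -/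
lemma key (n : ℕ) (i : Fin n) :
    ∑ j ∈ Finset.range (n+1),
      (- MvPolynomial.X i) ^ j * MvPolynomial.esymm (Fin n) ℤ (n - j) = 0 := by
  have h := MvPolynomial.prod_C_add_X_eq_sum_esymm ℤ (Fin n)
  have h2 := congrArg (Polynomial.eval (- MvPolynomial.X i : MvPolynomial (Fin n) ℤ)) h
  rw [Polynomial.eval_prod, Polynomial.eval_finset_sum] at h2
  simp only [Polynomial.eval_add, Polynomial.eval_X, Polynomial.eval_C, Polynomial.eval_mul,
    Polynomial.eval_pow, Fintype.card_fin] at h2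
  have hl : ∏ k : Fin n, (- MvPolynomial.X i + MvPolynomial.X k : MvPolynomial (Fin n) ℤ) = 0 := by
    apply Finset.prod_eq_zero (Finset.mem_univ i)
    ring
  rw [hl, ← Finset.sum_range_reflect] at h2
  calc ∑ j ∈ Finset.range (n+1), (- MvPolynomial.X i) ^ j * MvPolynomial.esymm (Fin n) ℤ (n - j)
      = ∑ j ∈ Finset.range (n+1), MvPolynomial.esymm (Fin n) ℤ (n + 1 - 1 - j) *
          (- MvPolynomial.X i) ^ (n - (n + 1 - 1 - j)) := by
        apply Finset.sum_congr rfl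
        intro j hj
        rw [Finset.mem_range] at hj
        have hj' : j ≤ n := Nat.lt_succ_iff.mp hj
        rw [Nat.add_sub_cancel, Nat.sub_sub_self hj', mul_comm]
    _ = 0 := h2.symm

/-- Let `b ≥ 2`, let `e_t` denote the elementary symmetric polynomial of
degree `t` in `x_1, ..., x_{2b-1}` over `ℤ`, let
`L = lcm(C(2b-1,0), ..., C(2b-1,b-1))`, and for `j ∈ [b]` let `c(j) = L / C(2b-1, j-1)`,
with `c(j) = c(2b+1-j)` for `j ∈ {b+1, ..., 2b}`.  Define the `2b × 2b` matrix `M` over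
`ℤ[x_1, ..., x_{2b-1}]` by `M_{i,j} = C(2b-1, j-1) (-x_i)^{j-1}` for `i ∈ [2b-1]` and
`M_{2b,j} = (-1)^{j-1} e_{j-1}`, and the column vector `u` by `u(j) = c(j) e_{2b-j}`
(all indices one-based in this description, zero-based in the formal statement).
Then `M · u = 0`. -/
theorem stmt_13 (b : ℕ) (hb : 2 ≤ b)
    (L : ℕ) (hL : L = (Finset.range b).lcm fun j => Nat.choose (2 * b - 1) j)
    (c : Fin (2 * b) → ℕ)
    (hc : ∀ j : Fin (2 * b), c j =
      if j.val < b then L / Nat.choose (2 * b - 1) j.val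
      else L / Nat.choose (2 * b - 1) (2 * b - 1 - j.val))
    (M : Matrix (Fin (2 * b)) (Fin (2 * b)) (MvPolynomial (Fin (2 * b - 1)) ℤ))
    (hM : ∀ i j, M i j =
      if h : i.val < 2 * b - 1 then
        (Nat.choose (2 * b - 1) j.val : MvPolynomial (Fin (2 * b - 1)) ℤ) *
          (- MvPolynomial.X ⟨i.val, h⟩) ^ j.val
      else (-1) ^ j.val * MvPolynomial.esymm (Fin (2 * b - 1)) ℤ j.val)
    (u : Fin (2 * b) → MvPolynomial (Fin (2 * b - 1)) ℤ)
    (hu : ∀ j : Fin (2 * b), u j =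
      (c j : MvPolynomial (Fin (2 * b - 1)) ℤ) *
        MvPolynomial.esymm (Fin (2 * b - 1)) ℤ (2 * b - 1 - j.val)) :
    M.mulVec u = 0 := by
  -- c·choose = L
  have hdvd : ∀ k, k < b → Nat.choose (2 * b - 1) k ∣ L := by
    intro k hk
    rw [hL]
    exact Finset.dvd_lcm (Finset.mem_range.mpr hk)
  have hLc : ∀ j : Fin (2 * b), Nat.choose (2 * b - 1) j.val * c j = L := by
    intro j
    rw [hc]
    split_ifs with h
    · exact Nat.mul_div_cancel' (hdvd _ h)
    · have hj : j.val ≤ 2 * b - 1 := by omega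
      rw [← Nat.choose_symm hj]
      exact Nat.mul_div_cancel' (hdvd _ (by omega))
  -- c symmetry
  have hcsym : ∀ j : Fin (2 * b), c (Fin.rev j) = c j := by
    intro j
    have hrev : (Fin.rev j).val = 2 * b - 1 - j.val := by
      simp [Fin.rev]; omega
    rw [hc, hc, hrev]
    by_cases h : j.val < b
    · rw [if_neg (by omega), if_pos h]
      have he : 2 * b - 1 - (2 * b - 1 - j.val) = j.val := by omega
      rw [he]
    · rw [if_pos (by omega), if_neg h]
  funext i
  simp only [Matrix.mulVec, dotProduct, Pi.zero_apply]
  by_cases h : i.val < 2 * b - 1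
  · -- rows with the x_i
    have key' := key (2 * b - 1) ⟨i.val, h⟩
    have h2b : 2 * b - 1 + 1 = 2 * b := by omega
    rw [h2b] at key'
    calc ∑ j : Fin (2 * b), M i j * u j
        = ∑ j : Fin (2 * b), (L : MvPolynomial (Fin (2 * b - 1)) ℤ) *
            ((- MvPolynomial.X ⟨i.val, h⟩) ^ j.val *
              MvPolynomial.esymm (Fin (2 * b - 1)) ℤ (2 * b - 1 - j.val)) := by
          apply Finset.sum_congr rfl
          intro j _
          rw [hM, hu, dif_pos h]
          have : ((Nat.choose (2 * b - 1) j.val * c j : ℕ) : MvPolynomial (Fin (2 * b - 1)) ℤ)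
              = (L : MvPolynomial (Fin (2 * b - 1)) ℤ) := by rw [hLc]
          push_cast at this
          rw [← this]
          ring
      _ = (L : MvPolynomial (Fin (2 * b - 1)) ℤ) *
            ∑ j : Fin (2 * b), (- MvPolynomial.X ⟨i.val, h⟩) ^ j.val *
              MvPolynomial.esymm (Fin (2 * b - 1)) ℤ (2 * b - 1 - j.val) := by
          rw [Finset.mul_sum]
      _ = 0 := by
          rw [Fin.sum_univ_eq_sum_range
            (fun k => (- MvPolynomial.X (⟨i.val, h⟩ : Fin (2*b-1))) ^ k *
              MvPolynomial.esymm (Fin (2 * b - 1)) ℤ (2 * b - 1 - k)), key', mul_zero]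
  · -- last row
    set S := ∑ j : Fin (2 * b), M i j * u j with hS
    have hSrev : S = ∑ j : Fin (2 * b), M i (Fin.rev j) * u (Fin.rev j) :=
      (Fintype.sum_bijective Fin.rev Fin.rev_bijective _ _ (fun x => rfl)).symm
    have hneg : ∀ j : Fin (2 * b), M i (Fin.rev j) * u (Fin.rev j) = -(M i j * u j) := by
      intro j
      have hrev : (Fin.rev j).val = 2 * b - 1 - j.val := by
        simp [Fin.rev]; omega
      rw [hM, hM, hu, hu, dif_neg h, dif_neg h, hcsym, hrev]
      have hsub : 2 * b - 1 - (2 * b - 1 - j.val) = j.val := by omega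
      rw [hsub]
      have hsign : ((-1 : MvPolynomial (Fin (2 * b - 1)) ℤ)) ^ (2 * b - 1 - j.val)
          = -(-1) ^ j.val := by
        have h1 : ((-1 : MvPolynomial (Fin (2 * b - 1)) ℤ)) ^ (2 * b - 1 - j.val) * (-1) ^ j.val
            = (-1) ^ (2 * b - 1) := by
          rw [← pow_add]
          congr 1
          omega
        have h2 : ((-1 : MvPolynomial (Fin (2 * b - 1)) ℤ)) ^ (2 * b - 1) = -1 :=
          Odd.neg_one_pow ⟨b - 1, by omega⟩
        have h3 : ((-1 : MvPolynomial (Fin (2 * b - 1)) ℤ)) ^ j.val * (-1) ^ j.val = 1 := by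
          rw [← mul_pow]; simp
        calc ((-1 : MvPolynomial (Fin (2 * b - 1)) ℤ)) ^ (2 * b - 1 - j.val)
            = (-1) ^ (2 * b - 1 - j.val) * ((-1) ^ j.val * (-1) ^ j.val) := by rw [h3, mul_one]
          _ = ((-1) ^ (2 * b - 1 - j.val) * (-1) ^ j.val) * (-1) ^ j.val := by ring
          _ = -(-1) ^ j.val := by rw [h1, h2]; ring
      rw [hsign]
      ring
    have : S = -S := by
      calc S = ∑ j : Fin (2 * b), M i (Fin.rev j) * u (Fin.rev j) := hSrev
        _ = ∑ j : Fin (2 * b), -(M i j * u j) := Finset.sum_congr rfl (fun j _ => hneg j)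
        _ = -S := by rw [hS, ← Finset.sum_neg_distrib]
    have h2S : S + S = 0 := by linear_combination this
    exact add_self_eq_zero.mp h2S
end

section
/- Let l ≥ 3 and n ≥ l be integers and set k = n + 1 and m = 4. Let V = {v_1, v_2, v_3, v_4} ⊆ ℕ^n, where v_1 = (1,...,1,3,0,0), v_2 = (1,...,1,0,3,0), v_3 = (1,...,1,0,0,3) (each with n-3 leading ones), and v_4 = (1,...,1) (the all-ones vector). Then V satisfies property V_l(k), but the polynomials in P(k, V) are linearly dependent over F_q(x_1, ..., x_n). In particular, Lovett's conjecture (that V(k) implies linear independence of P(k,V)) is false for every l ≥ 3. -/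
set_option maxHeartbeats 1000000 in
set_option synthInstance.maxHeartbeats 400000 in
/-- Let `l ≥ 3`, `n ≥ l`, `k = n + 1`, `m = 4` and
`V = {v_1, v_2, v_3, v_4} ⊆ ℕ^n` with `v_1 = (1,...,1,3,0,0)`, `v_2 = (1,...,1,0,3,0)`,
`v_3 = (1,...,1,0,0,3)` (each with `n - 3` leading ones) and `v_4 = (1,...,1)`.
Then `V` satisfies property `V_l(k)` — that is,
(I) `|v_i| ≤ k - 1`; (II) `∑_{i∈I} (k - |v_i|) + |μ_V(I)| ≤ k` for all nonempty `I ⊆ [4]`;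
(III) `v_i ∈ {0,1}^{n-l} × ℕ^l` — but the polynomials in `P(k, V)` are linearly dependent
over `F_q(x_1, ..., x_n)`.  (Hence Lovett's conjecture fails for every `l ≥ 3`.) -/
theorem stmt_15 (F : Type) [Field F] [Fintype F] (l n : ℕ) (hl : 3 ≤ l) (hn : l ≤ n)
    (v : Fin 4 → Fin n → ℕ)
    (hv : ∀ i j, v i j =
      if i.val = 3 then 1
      else if j.val < n - 3 then 1
      else if j.val = n - 3 + i.val then 3 else 0) :
    ((∀ i, ∑ j, v i j ≤ (n + 1) - 1) ∧
     (∀ (I : Finset (Fin 4)) (hne : I.Nonempty),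
       (∑ i ∈ I, ((n + 1) - ∑ j, v i j)) + ∑ j, I.inf' hne (fun i => v i j) ≤ n + 1) ∧
     (∀ i (j : Fin n), j.val < n - l → v i j ≤ 1)) ∧
    ¬ LinearIndependent (FractionRing (MvPolynomial (Fin n) F))
      (fun p : Σ i : Fin 4, Fin ((n + 1) - ∑ j, v i j) =>
        (∏ j : Fin n,
          (Polynomial.X - Polynomial.C (algebraMap (MvPolynomial (Fin n) F)
            (FractionRing (MvPolynomial (Fin n) F)) (MvPolynomial.X j))) ^ (v p.1 j)) *
          Polynomial.X ^ (p.2 : ℕ)) := by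
  obtain ⟨m, rfl⟩ : ∃ m, n = m + 3 := ⟨n - 3, by omega⟩
  have hbig : ∀ (i : Fin 4) (t : Fin 3), v i (Fin.natAdd m t) =
      if i.val = 3 then 1 else if (t : ℕ) = i.val then 3 else 0 := by
    intro i t
    rw [hv]
    rcases eq_or_ne i.val 3 with hi | hi
    · simp [hi]
    · rw [if_neg hi, if_neg hi]
      have h1 : ¬ ((Fin.natAdd m t : Fin (m + 3)).val < m + 3 - 3) := by
        simp only [Fin.coe_natAdd]; omega
      rw [if_neg h1]
      have h2 : ((Fin.natAdd m t : Fin (m + 3)).val = m + 3 - 3 + i.val) ↔ ((t : ℕ) = i.val) := by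
        simp only [Fin.coe_natAdd]; omega
      by_cases h3 : (t : ℕ) = i.val
      · rw [if_pos (h2.mpr h3), if_pos h3]
      · rw [if_neg (fun hh => h3 (h2.mp hh)), if_neg h3]
  have hsmall : ∀ (i : Fin 4) (j : Fin (m + 3)), (j : ℕ) < m → v i j = 1 := by
    intro i j hj
    rw [hv]
    rcases eq_or_ne i.val 3 with hi | hi
    · simp [hi]
    · rw [if_neg hi, if_pos (by omega)]
  have hsum : ∀ i, ∑ j, v i j = m + 3 := by
    intro i
    rw [Fin.sum_univ_add (fun j : Fin (m + 3) => v i j)]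
    have h1 : (∑ j : Fin m, v i (Fin.castAdd 3 j)) = m := by
      rw [Finset.sum_congr rfl (fun j _ => hsmall i _ (by simpa using j.isLt))]
      simp
    have h2 : (∑ t : Fin 3, v i (Fin.natAdd m t)) = 3 := by
      rw [Fin.sum_univ_three, hbig, hbig, hbig]
      fin_cases i <;> decide
    rw [h1, h2]
  refine ⟨⟨fun i => by rw [hsum]; omega, ?_, ?_⟩, ?_⟩
  · -- property (II)
    intro I hne
    have key : I.card + ((I.inf' hne fun i => if i.val = 3 then 1 else if ((0 : Fin 3) : ℕ) = i.val then 3 else 0)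
             + (I.inf' hne fun i => if i.val = 3 then 1 else if ((1 : Fin 3) : ℕ) = i.val then 3 else 0)
             + (I.inf' hne fun i => if i.val = 3 then 1 else if ((2 : Fin 3) : ℕ) = i.val then 3 else 0)) ≤ 4 := by
      revert hne
      fin_cases I <;> decide
    have e1 : ∑ i ∈ I, ((m + 3 + 1) - ∑ j, v i j) = I.card := by
      rw [Finset.sum_congr rfl (fun i _ => by rw [hsum i])]
      simp
    have e2 : ∑ j : Fin (m + 3), I.inf' hne (fun i => v i j)
        = m + ((I.inf' hne fun i => if i.val = 3 then 1 else if ((0 : Fin 3) : ℕ) = i.val then 3 else 0)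
             + (I.inf' hne fun i => if i.val = 3 then 1 else if ((1 : Fin 3) : ℕ) = i.val then 3 else 0)
             + (I.inf' hne fun i => if i.val = 3 then 1 else if ((2 : Fin 3) : ℕ) = i.val then 3 else 0)) := by
      rw [Fin.sum_univ_add (fun j : Fin (m + 3) => I.inf' hne (fun i => v i j))]
      have ha : (∑ j : Fin m, I.inf' hne (fun i => v i (Fin.castAdd 3 j))) = m := by
        have hc : ∀ j : Fin m, I.inf' hne (fun i => v i (Fin.castAdd 3 j)) = 1 := by
          intro j
          rw [show (fun i => v i (Fin.castAdd 3 j)) = fun _ => 1 from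
            funext fun i => hsmall i _ (by simpa using j.isLt)]
          exact Finset.inf'_const hne 1
        rw [Finset.sum_congr rfl (fun j _ => hc j)]
        simp
      rw [ha, Fin.sum_univ_three]
      simp only [hbig]
    rw [e1, e2]
    omega
  · -- property (III)
    intro i j hj
    have := hsmall i j (by omega)
    omega
  · -- linear dependence
    have hN : ∀ i : Fin 4, (m + 3 + 1) - (∑ j, v i j) = 1 := fun i => by rw [hsum]; omega
    rw [Fintype.not_linearIndependent_iff]
    set K := FractionRing (MvPolynomial (Fin (m + 3)) F) with hK
    set a : Fin 3 → K := fun t => algebraMap (MvPolynomial (Fin (m + 3)) F) K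
      (MvPolynomial.X (Fin.natAdd m t)) with ha
    refine ⟨fun p => ![(a 1 - a 2) ^ 3, (a 2 - a 0) ^ 3, (a 0 - a 1) ^ 3,
        -(3 * ((a 1 - a 2) * ((a 2 - a 0) * (a 0 - a 1))))] p.1, ?_, ?_⟩
    · -- the linear combination vanishes
      rw [← Finset.univ_sigma_univ, Finset.sum_sigma]
      have hone : ∀ (i : Fin 4) (e : Fin ((m + 3 + 1) - ∑ j, v i j)), (e : ℕ) = 0 := by
        intro i e
        have h := e.isLt
        have h2 := hsum i
        omega
      have inner : ∀ i : Fin 4,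
          (∑ e : Fin ((m + 3 + 1) - ∑ j, v i j),
            (![(a 1 - a 2) ^ 3, (a 2 - a 0) ^ 3, (a 0 - a 1) ^ 3,
              -(3 * ((a 1 - a 2) * ((a 2 - a 0) * (a 0 - a 1))))] i : K) •
            ((∏ j : Fin (m + 3),
              (Polynomial.X - Polynomial.C (algebraMap (MvPolynomial (Fin (m + 3)) F) K
                (MvPolynomial.X j))) ^ (v i j)) * Polynomial.X ^ (e : ℕ)))
          = (![(a 1 - a 2) ^ 3, (a 2 - a 0) ^ 3, (a 0 - a 1) ^ 3,
              -(3 * ((a 1 - a 2) * ((a 2 - a 0) * (a 0 - a 1))))] i : K) •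
            (∏ j : Fin (m + 3),
              (Polynomial.X - Polynomial.C (algebraMap (MvPolynomial (Fin (m + 3)) F) K
                (MvPolynomial.X j))) ^ (v i j)) := by
        intro i
        rw [Finset.sum_congr rfl (fun e _ => by rw [hone i e, pow_zero, mul_one])]
        rw [Finset.sum_const]
        have hcard : (Finset.univ : Finset (Fin ((m + 3 + 1) - ∑ j, v i j))).card = 1 := by
          simp [hN i]
        rw [hcard, one_nsmul]
      rw [Fin.sum_univ_four, inner 0, inner 1, inner 2, inner 3]
      have hP : ∀ i : Fin 4,
          (∏ j : Fin (m + 3),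
            (Polynomial.X - Polynomial.C (algebraMap (MvPolynomial (Fin (m + 3)) F) K
              (MvPolynomial.X j))) ^ (v i j))
          = (∏ j : Fin m,
              (Polynomial.X - Polynomial.C (algebraMap (MvPolynomial (Fin (m + 3)) F) K
                (MvPolynomial.X (Fin.castAdd 3 j)))))
            * ((Polynomial.X - Polynomial.C (a 0)) ^ (v i (Fin.natAdd m 0))
              * (Polynomial.X - Polynomial.C (a 1)) ^ (v i (Fin.natAdd m 1))
              * (Polynomial.X - Polynomial.C (a 2)) ^ (v i (Fin.natAdd m 2))) := by
        intro i
        rw [Fin.prod_univ_add (fun j : Fin (m + 3) =>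
          (Polynomial.X - Polynomial.C (algebraMap (MvPolynomial (Fin (m + 3)) F) K
            (MvPolynomial.X j))) ^ (v i j)), Fin.prod_univ_three]
        congr 1
        exact Finset.prod_congr rfl fun j _ => by
          rw [hsmall i _ (by simpa using j.isLt), pow_one]
      rw [hP 0, hP 1, hP 2, hP 3,
        show v 0 (Fin.natAdd m 0) = 3 from by rw [hbig]; decide,
        show v 0 (Fin.natAdd m 1) = 0 from by rw [hbig]; decide,
        show v 0 (Fin.natAdd m 2) = 0 from by rw [hbig]; decide,
        show v 1 (Fin.natAdd m 0) = 0 from by rw [hbig]; decide,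
        show v 1 (Fin.natAdd m 1) = 3 from by rw [hbig]; decide,
        show v 1 (Fin.natAdd m 2) = 0 from by rw [hbig]; decide,
        show v 2 (Fin.natAdd m 0) = 0 from by rw [hbig]; decide,
        show v 2 (Fin.natAdd m 1) = 0 from by rw [hbig]; decide,
        show v 2 (Fin.natAdd m 2) = 3 from by rw [hbig]; decide,
        show v 3 (Fin.natAdd m 0) = 1 from by rw [hbig]; decide,
        show v 3 (Fin.natAdd m 1) = 1 from by rw [hbig]; decide,
        show v 3 (Fin.natAdd m 2) = 1 from by rw [hbig]; decide]
      simp only [Matrix.cons_val_zero, Matrix.cons_val_one, Matrix.head_cons,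
        Matrix.cons_val_two, Matrix.tail_cons, Matrix.cons_val_three,
        pow_zero, pow_one, mul_one, one_mul]
      simp only [Polynomial.smul_eq_C_mul, map_pow, map_sub, map_mul, map_neg, map_ofNat]
      ring
    · -- nontrivial coefficient
      refine ⟨⟨0, ⟨0, by rw [hN]; omega⟩⟩, ?_⟩
      simp only [Matrix.cons_val_zero]
      apply pow_ne_zero
      rw [sub_ne_zero]
      intro h
      have h2 := IsFractionRing.injective (MvPolynomial (Fin (m + 3)) F) K h
      have h3 := MvPolynomial.X_injective h2
      have h4 : ((Fin.natAdd m (1 : Fin 3)) : ℕ) = ((Fin.natAdd m (2 : Fin 3)) : ℕ) := by rw [h3]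
      simp only [Fin.coe_natAdd] at h4
      omega
end

section
/- The four polynomials (x - x_1)(x - x_2)^3, (x - x_1)(x - x_3)^3, (x - x_1)(x - x_4)^3, and (x - x_1)(x - x_2)(x - x_3)(x - x_4) in F_q(x_1, x_2, x_3, x_4)[x] are linearly dependent over F_q(x_1, x_2, x_3, x_4), and the set Y = {(1,3,0,0), (1,0,3,0), (1,0,0,3), (1,1,1,1)} ⊆ ℕ^4 satisfies property V_3(5). -/
/-- The variable `x_i` (`i ∈ {1,2,3,4}`, zero-indexed) in `F_q(x_1, x_2, x_3, x_4)`. -/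
noncomputable def xvar4 (F : Type) [Field F] (i : Fin 4) :
    FractionRing (MvPolynomial (Fin 4) F) :=
  algebraMap (MvPolynomial (Fin 4) F) (FractionRing (MvPolynomial (Fin 4) F))
    (MvPolynomial.X i)

set_option maxHeartbeats 1000000 in
set_option synthInstance.maxHeartbeats 200000 in
/-- The four polynomials `(x-x_1)(x-x_2)^3`, `(x-x_1)(x-x_3)^3`,
`(x-x_1)(x-x_4)^3` and `(x-x_1)(x-x_2)(x-x_3)(x-x_4)` in `F_q(x_1,x_2,x_3,x_4)[x]` are
linearly dependent over `F_q(x_1,x_2,x_3,x_4)`, and the set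
`Y = {(1,3,0,0), (1,0,3,0), (1,0,0,3), (1,1,1,1)} ⊆ ℕ^4` satisfies property `V_3(5)`:
(I) `|y_i| ≤ 4`; (II) `∑_{i∈I} (5 - |y_i|) + |μ_Y(I)| ≤ 5` for all nonempty `I ⊆ [4]`;
(III) `y_i ∈ {0,1}^{4-3} × ℕ^3`. -/
theorem stmt_16 (F : Type) [Field F] [Fintype F] :
    (¬ LinearIndependent (FractionRing (MvPolynomial (Fin 4) F))
      ![(Polynomial.X - Polynomial.C (xvar4 F 0)) *
          (Polynomial.X - Polynomial.C (xvar4 F 1)) ^ 3,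
        (Polynomial.X - Polynomial.C (xvar4 F 0)) *
          (Polynomial.X - Polynomial.C (xvar4 F 2)) ^ 3,
        (Polynomial.X - Polynomial.C (xvar4 F 0)) *
          (Polynomial.X - Polynomial.C (xvar4 F 3)) ^ 3,
        (Polynomial.X - Polynomial.C (xvar4 F 0)) *
          ((Polynomial.X - Polynomial.C (xvar4 F 1)) *
            ((Polynomial.X - Polynomial.C (xvar4 F 2)) *
              (Polynomial.X - Polynomial.C (xvar4 F 3))))]) ∧
    (let Y : Fin 4 → Fin 4 → ℕ := ![![1,3,0,0], ![1,0,3,0], ![1,0,0,3], ![1,1,1,1]]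
     (∀ i, ∑ j, Y i j ≤ 5 - 1) ∧
     (∀ (I : Finset (Fin 4)) (hne : I.Nonempty),
       (∑ i ∈ I, (5 - ∑ j, Y i j)) + ∑ j, I.inf' hne (fun i => Y i j) ≤ 5) ∧
     (∀ i (j : Fin 4), j.val < 4 - 3 → Y i j ≤ 1)) := by

  constructor
  · set K := FractionRing (MvPolynomial (Fin 4) F)
    set a := xvar4 F 0
    set b := xvar4 F 1
    set c := xvar4 F 2
    set d := xvar4 F 3
    have hbc : b ≠ c := by
      intro h
      have := IsFractionRing.injective (MvPolynomial (Fin 4) F) K h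
      have h2 := congrArg (MvPolynomial.eval (fun k : Fin 4 => if k = 1 then (1 : F) else 0)) this
      simp at h2
    rw [Fintype.linearIndependent_iff]
    push_neg
    refine ⟨![(d - c) ^ 3, (b - d) ^ 3, (c - b) ^ 3, -(3 * ((d - c) * ((b - d) * (c - b))))], ?_, 2, ?_⟩
    · rw [Fin.sum_univ_four]
      simp only [Matrix.cons_val_zero, Matrix.cons_val_one, Matrix.head_cons,
        Matrix.cons_val_two, Matrix.tail_cons, Matrix.cons_val_three,
        Matrix.cons_val', Matrix.cons_val_fin_one, Matrix.empty_val',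
        Polynomial.smul_eq_C_mul, Polynomial.C_pow, Polynomial.C_neg, Polynomial.C_mul,
        Polynomial.C_sub, map_ofNat]
      ring
    · simp only [Matrix.cons_val_two, Matrix.tail_cons, Matrix.head_cons]
      exact pow_ne_zero _ (sub_ne_zero.mpr (Ne.symm hbc))
  · refine ⟨by decide, ?_, by decide⟩
    decide
end
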